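/- Every language recognized by a generalized unique hard attention Transformer (GUHAT) is in AC⁰: for every GUHAT T over alphabet Σ with s = ⌈log₂(|Σ|+2)⌉ and any binary symbol encoding h of Σ ∪ {$}, there is a family of Boolean circuits {C_m} of constant depth and polynomial size such that for all n and all x ∈ Σ^{n−1}, C_{sn}(h(x$)) = 1 iff x ∈ L(T). -/

import Mathlib

/-- Kinds of gates in a Boolean circuit. -/
inductive GateKind | const0 | const1 | not | and | or
  deriving DecidableEq

/-- A Boolean circuit with `n` inputs and `m` outputs: a directed acyclic graph whose
vertices are the `n` inputs together with `g` gates (listed in topological order), each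
gate labeled by a kind and receiving wires from inputs and earlier gates; NOT gates have
fan-in 1, constant gates fan-in 0, AND/OR gates unbounded fan-in. `m` (not necessarily
distinct) vertices are designated as outputs. -/
structure Circuit (n m : ℕ) where
  g : ℕ
  kind : Fin g → GateKind
  preds : Fin g → List (Fin n ⊕ Fin g)
  wf : ∀ i j : Fin g, Sum.inr j ∈ preds i → j < i
  faninNot : ∀ i, kind i = .not → (preds i).length = 1
  faninConst0 : ∀ i, kind i = .const0 → preds i = []
  faninConst1 : ∀ i, kind i = .const1 → preds i = []
  out : Fin m → (Fin n ⊕ Fin g)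

namespace Circuit

/-- The Boolean operation computed by a gate from the values on its input wires. -/
def gateOp (k : GateKind) (vs : List Bool) : Bool :=
  match k with
  | .const0 => false
  | .const1 => true
  | .not => !(vs.headD false)
  | .and => vs.all id
  | .or => vs.any id

/-- `v` is the (unique) assignment of Boolean values to the vertices of `C` consistent
with the input assignment `x` and the gate semantics. -/
def Consistent {n m : ℕ} (C : Circuit n m) (x : Fin n → Bool) (v : (Fin n ⊕ Fin C.g) → Bool) :
    Prop :=
  (∀ j, v (Sum.inl j) = x j) ∧
  (∀ i : Fin C.g, v (Sum.inr i) = gateOp (C.kind i) ((C.preds i).map v))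

/-- The size of a circuit: its total number of wires. -/
def size {n m : ℕ} (C : Circuit n m) : ℕ := ∑ i : Fin C.g, (C.preds i).length

/-- The depth of `C` (the maximum length of a directed path of wires from an input to an
output) is at most `K`: witnessed by a level function increasing along every wire,
zero on inputs, and at most `K` on outputs. -/
def DepthLE {n m : ℕ} (C : Circuit n m) (K : ℕ) : Prop :=
  ∃ lev : (Fin n ⊕ Fin C.g) → ℕ,
    (∀ j, lev (Sum.inl j) = 0) ∧
    (∀ i : Fin C.g, ∀ p ∈ C.preds i, lev p < lev (Sum.inr i)) ∧
    (∀ o, lev (C.out o) ≤ K)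

/-- `C` computes the Boolean function `f : {0,1}ⁿ → {0,1}^m`. -/
def Computes {n m : ℕ} (C : Circuit n m) (f : (Fin n → Bool) → (Fin m → Bool)) : Prop :=
  ∀ x v, C.Consistent x v → ∀ o, v (C.out o) = f x o

end Circuit

open Classical in
/-- The leftmost position maximizing the attention scores `a` (unique hard attention). -/
noncomputable def leftmostArgmax {n : ℕ} (hn : 0 < n) (a : Fin n → ℝ) : Fin n :=
  have : Nonempty (Fin n) := ⟨⟨0, hn⟩⟩
  (Finset.univ.filter (fun j => ∀ l, a l ≤ a j)).min'
    (by
      obtain ⟨j, hj⟩ := Finite.exists_max a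
      exact ⟨j, Finset.mem_filter.mpr ⟨Finset.mem_univ _, hj⟩⟩)

/-- A generalized (unique hard attention) Transformer over alphabet `σ`, with `K` layers
and `H` heads: arbitrary activation values `A`, an input function `f` (taking the symbol,
which may be the end-of-sequence marker `$ = Sum.inr ()`, the position, and the input
length), real-valued attention functions for each layer `k ∈ [1..K]` and head
`h ∈ [1..H]`, activation functions for each layer, and a `{0,1}`-valued output
function `g`. -/
structure GT (σ : Type) where
  K : ℕ
  H : ℕ
  A : Type
  f : (σ ⊕ Unit) → ℕ → ℕ → A
  fatt : ℕ → ℕ → A → A → ℝ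
  fact : ℕ → A → (Fin H → A) → A
  g : A → Bool

namespace GT

variable {σ : Type}

/-- The input sequence of symbols for input string `x`, with `$` appended. -/
def inputSeq (x : List σ) : Fin (x.length + 1) → (σ ⊕ Unit) := fun i =>
  if h : (i : ℕ) < x.length then Sum.inl (x.get ⟨i, h⟩) else Sum.inr ()

/-- Initial (layer-0) activation values `y⁰ᵢ = f(xᵢ, i, n)` (positions are `1`-based). -/
def y0 (T : GT σ) (x : List σ) : Fin (x.length + 1) → T.A := fun i =>
  T.f (inputSeq x i) ((i : ℕ) + 1) (x.length + 1)

/-- One layer of unique-hard-attention computation: each position attends, for each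
head, to the leftmost position maximizing the attention score, and applies the
activation function. Layers are numbered `1, …, K`. -/
noncomputable def layer (T : GT σ) {n : ℕ} (hn : 0 < n) (k : ℕ) (y : Fin n → T.A) :
    Fin n → T.A := fun i =>
  T.fact k (y i)
    (fun _h => y (leftmostArgmax hn (fun j => T.fatt k (_h : Fin T.H).val.succ (y i) (y j))))

/-- The activation values at layer `k` (layer `0` being the initial activations). -/
noncomputable def acts (T : GT σ) {n : ℕ} (hn : 0 < n) (y₀ : Fin n → T.A) :
    ℕ → Fin n → T.A
  | 0 => y₀
  | k + 1 => T.layer hn (k + 1) (T.acts hn y₀ k)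

/-- `T` accepts `x` iff the output function applied to the final-layer activation at the
last position of `x$` equals `1`. -/
noncomputable def accepts (T : GT σ) (x : List σ) : Prop :=
  T.g (T.acts (Nat.succ_pos _) (T.y0 x) T.K ⟨x.length, Nat.lt_succ_self _⟩) = true

/-- The language recognized by `T`: `L(T) = {x ∈ σ* : T accepts x$}`. -/
def lang (T : GT σ) : Set (List σ) := {x | T.accepts x}

end GT

/-- The bit string encoding the input `x$` under a binary symbol encoding `h` with
`s` bits per symbol: bit `r` is bit `r mod s` of the encoding of the symbol in
position `r / s`. -/
def encodeInput {σ : Type} {s : ℕ} (hs : 0 < s) (h : (σ ⊕ Unit) → Fin s → Bool)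
    (x : List σ) : Fin (s * (x.length + 1)) → Bool := fun r =>
  h (GT.inputSeq x ⟨(r : ℕ) / s, Nat.div_lt_of_lt_mul r.isLt⟩)
    ⟨(r : ℕ) % s, Nat.mod_lt _ hs⟩

/-!
Replace activations by *histories*: the layer-`0` history of a position is its index and
symbol, and its layer-`(k+1)` history consists of its own layer-`k` history and the `H`
layer-`k` histories its heads attend to. A history determines the activation, and for a fixed
transformer there are only polynomially many histories of each layer. For every history `d`
there is a formula of depth `O(k)` and polynomial fan-in stating that `d` is the actual
history at its position: at layer `0` it compares `s` input bits; at layer `k+1` it asks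
that the components be actual and that, for every head and every position `j`, the actual
history at `j` score no higher than the attended one, strictly so if `j` lies to its left.
The input is accepted iff some actual layer-`K` history of the last position is accepted by
the output function. Bounded depth and polynomial fan-in give polynomial size, and formulas
compile into circuits of the same depth and size.
-/

namespace Circuit

variable {n m : ℕ} {V : Type*}

def evalWith (C : Circuit n m) (leaf : Fin n → V) (op : GateKind → List V → V) :
    Fin n ⊕ Fin C.g → V
  | .inl j => leaf j
  | .inr i => op (C.kind i) ((C.preds i).map fun p => C.evalWith leaf op p)
termination_by p => p.elim (fun _ => 0) (fun i => i.val + 1)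
decreasing_by
  rcases p with _ | j
  · simp
  · have := C.wf i j ‹_›
    simp only [Sum.elim_inr]
    omega

theorem evalWith_inl (C : Circuit n m) (leaf : Fin n → V) (op : GateKind → List V → V)
    (j : Fin n) : C.evalWith leaf op (.inl j) = leaf j := by
  rw [evalWith]

theorem evalWith_inr (C : Circuit n m) (leaf : Fin n → V) (op : GateKind → List V → V)
    (i : Fin C.g) :
    C.evalWith leaf op (.inr i) = op (C.kind i) ((C.preds i).map (C.evalWith leaf op)) := by
  rw [evalWith]

def levelOp (_ : GateKind) (ds : List ℕ) : ℕ := ds.foldr max 0 + 1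

theorem depthLE_of_evalWith_levelOp_le (C : Circuit n m) {K : ℕ}
    (h : ∀ o, C.evalWith (fun _ => 0) levelOp (C.out o) ≤ K) : C.DepthLE K := by
  refine ⟨C.evalWith (fun _ => 0) levelOp, C.evalWith_inl _ _, fun i p hp => ?_, h⟩
  rw [evalWith_inr, levelOp, Nat.lt_succ_iff]
  exact List.le_max_of_le' 0 (List.mem_map_of_mem hp) le_rfl

theorem DepthLE.mono {C : Circuit n m} {K K' : ℕ} (h : C.DepthLE K) (hK : K ≤ K') :
    C.DepthLE K' :=
  let ⟨lev, hin, hwire, hout⟩ := h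
  ⟨lev, hin, hwire, fun o => (hout o).trans hK⟩

end Circuit

/-- Gates in topological order; the wire `Sum.inr j` comes from the `j`-th gate. -/
abbrev Netlist (n : ℕ) := List (GateKind × List (Fin n ⊕ ℕ))

namespace Netlist

variable {n : ℕ} {V : Type*}

def RefBelow (b : ℕ) (r : Fin n ⊕ ℕ) : Prop := r.elim (fun _ => True) (· < b)

theorem RefBelow.mono {b b' : ℕ} {r : Fin n ⊕ ℕ} (h : RefBelow b r) (hb : b ≤ b') :
    RefBelow b' r := by
  rcases r with _ | j
  · trivial
  · exact lt_of_lt_of_le h hb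

def ArityOK {α : Type*} (k : GateKind) (refs : List α) : Prop :=
  (k = .not → refs.length = 1) ∧ (k = .const0 → refs = []) ∧ (k = .const1 → refs = [])

def WellFormed (L : Netlist n) : Prop :=
  ∀ i (hi : i < L.length), (∀ r ∈ L[i].2, RefBelow i r) ∧ ArityOK L[i].1 L[i].2

def push (L : Netlist n) (k : GateKind) (refs : List (Fin n ⊕ ℕ)) :
    Netlist n × (Fin n ⊕ ℕ) :=
  (L ++ [(k, refs)], .inr L.length)

theorem refBelow_push (L : Netlist n) (k : GateKind) (refs : List (Fin n ⊕ ℕ)) :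
    RefBelow (L.push k refs).1.length (L.push k refs).2 := by
  simp [push, RefBelow]

theorem WellFormed.push {L : Netlist n} (hL : L.WellFormed) {k : GateKind}
    {refs : List (Fin n ⊕ ℕ)} (hrefs : ∀ r ∈ refs, RefBelow L.length r) (hk : ArityOK k refs) :
    (L.push k refs).1.WellFormed := by
  intro i hi
  simp only [Netlist.push, List.length_append, List.length_singleton] at hi
  rcases Nat.lt_succ_iff_lt_or_eq.mp hi with hi | rfl
  · simpa only [Netlist.push, List.getElem_append_left hi] using hL i hi
  · simpa only [Netlist.push, List.getElem_append_right le_rfl, Nat.sub_self,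
      List.getElem_cons_zero] using ⟨hrefs, hk⟩

def Solves (L : Netlist n) (leaf : Fin n → V) (op : GateKind → List V → V) (val : ℕ → V) :
    Prop :=
  ∀ i (hi : i < L.length), val i = op L[i].1 (L[i].2.map (Sum.elim leaf val))

section Solves

variable {leaf : Fin n → V} {op : GateKind → List V → V} {val : ℕ → V}

theorem Solves.of_prefix {L M : Netlist n} (h : M.Solves leaf op val) (hLM : L <+: M) :
    L.Solves leaf op val := by
  intro i hi
  rw [hLM.getElem hi]
  exact h i (hi.trans_le hLM.length_le)

theorem Solves.push {L : Netlist n} {k : GateKind} {refs : List (Fin n ⊕ ℕ)}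
    (h : (L.push k refs).1.Solves leaf op val) :
    Sum.elim leaf val (L.push k refs).2 = op k (refs.map (Sum.elim leaf val)) := by
  simpa [Netlist.push] using h L.length (by simp [Netlist.push])

end Solves

def wires (L : Netlist n) : ℕ := (L.map fun nd => nd.2.length).sum

theorem wires_push (L : Netlist n) (k : GateKind) (refs : List (Fin n ⊕ ℕ)) :
    wires (L.push k refs).1 = wires L + refs.length := by
  simp [wires, push]

def castRef {g : ℕ} : (r : Fin n ⊕ ℕ) → RefBelow g r → Fin n ⊕ Fin g
  | .inl a, _ => .inl a
  | .inr j, h => .inr ⟨j, h⟩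

def toCircuit (L : Netlist n) (hL : L.WellFormed) (root : Fin n ⊕ ℕ)
    (hroot : RefBelow L.length root) : Circuit n 1 where
  g := L.length
  kind i := L[i].1
  preds i := L[i].2.pmap castRef fun r hr => ((hL i i.2).1 r hr).mono i.2.le
  wf i j hj := by
    obtain ⟨r, hr, hrj⟩ := List.mem_pmap.mp hj
    rcases r with _ | j'
    · simp [castRef] at hrj
    · simp only [castRef, Sum.inr.injEq] at hrj
      subst hrj
      exact (hL i i.2).1 _ hr
  faninNot i hk := by rw [List.length_pmap]; exact (hL i i.2).2.1 hk
  faninConst0 i hk := by simp [(hL i i.2).2.2.1 hk]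
  faninConst1 i hk := by simp [(hL i i.2).2.2.2 hk]
  out _ := castRef root hroot

theorem size_toCircuit (L : Netlist n) (hL : L.WellFormed) (root : Fin n ⊕ ℕ)
    (hroot : RefBelow L.length root) : (L.toCircuit hL root hroot).size = L.wires := by
  simp only [Circuit.size, toCircuit, List.length_pmap, wires]
  exact Fin.sum_univ_fun_getElem L fun nd => nd.2.length

theorem exists_solves_of_toCircuit [Inhabited V] {L : Netlist n} {hL : L.WellFormed}
    {root : Fin n ⊕ ℕ} {hroot : RefBelow L.length root} {leaf : Fin n → V}
    {op : GateKind → List V → V} (w : Fin n ⊕ Fin L.length → V)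
    (hleaf : ∀ j, w (.inl j) = leaf j)
    (hgate : ∀ i, w (.inr i) = op L[i].1 (((L.toCircuit hL root hroot).preds i).map w)) :
    ∃ val, L.Solves leaf op val ∧
      w ((L.toCircuit hL root hroot).out 0) = Sum.elim leaf val root := by
  let val (j : ℕ) : V := if h : j < L.length then w (.inr ⟨j, h⟩) else default
  have hcast : ∀ r (hr : RefBelow L.length r), w (castRef r hr) = Sum.elim leaf val r := by
    rintro (a | j) hr
    · exact hleaf a
    · simp only [castRef, Sum.elim_inr, val, dif_pos (show j < L.length from hr)]
  refine ⟨val, fun i hi => ?_, hcast root hroot⟩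
  rw [show val i = w (.inr ⟨i, hi⟩) from dif_pos hi, hgate]
  simp only [toCircuit, List.map_pmap, hcast, List.pmap_eq_map]
  rfl

end Netlist

theorem List.length_add_sum_le_length_mul {ws : List ℕ} {B : ℕ} (h : ∀ w ∈ ws, w < B) :
    ws.length + ws.sum ≤ ws.length * B := by
  induction ws with
  | nil => simp
  | cons w ws ih =>
    simp only [List.mem_cons, forall_eq_or_imp] at h
    simp only [List.length_cons, List.sum_cons, Nat.succ_mul]
    have := ih h.2
    omega

/-- `lit i b` is the literal `xᵢ = b`. -/
inductive Formula (n : ℕ) where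
  | lit (i : Fin n) (b : Bool)
  | and (l : List (Formula n))
  | or (l : List (Formula n))

namespace Formula

variable {n : ℕ} {V : Type*}

/-- Values, levels and wire counts are all folds, so that one compilation lemma,
`fold_eq_of_solves`, serves for the values and the depth of the compiled circuit. -/
def fold (leaf : Fin n → V) (op : GateKind → List V → V) : Formula n → V
  | lit i b => if b then leaf i else op .not [leaf i]
  | .and l => op .and (l.map (fold leaf op))
  | .or l => op .or (l.map (fold leaf op))

def eval (x : Fin n → Bool) : Formula n → Bool := fold x Circuit.gateOp

def depth : Formula n → ℕ := fold (fun _ => 0) Circuit.levelOp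

def size : Formula n → ℕ := fold (fun _ => 0) fun _ ws => ws.length + ws.sum

section Gates

variable (l : List (Formula n))

theorem eval_and (x : Fin n → Bool) : (and l).eval x = true ↔ ∀ φ ∈ l, φ.eval x = true := by
  rw [eval, fold, ← eval]
  simp [Circuit.gateOp]

theorem eval_or (x : Fin n → Bool) : (or l).eval x = true ↔ ∃ φ ∈ l, φ.eval x = true := by
  rw [eval, fold, ← eval]
  simp [Circuit.gateOp]

theorem depth_and : (and l).depth = (l.map depth).foldr max 0 + 1 := by
  rw [depth, fold, ← depth]
  rfl

theorem depth_or : (or l).depth = (l.map depth).foldr max 0 + 1 := by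
  rw [depth, fold, ← depth]
  rfl

theorem size_and : (and l).size = l.length + (l.map size).sum := by
  rw [size, fold, ← size, List.length_map]

theorem size_or : (or l).size = l.length + (l.map size).sum := by
  rw [size, fold, ← size, List.length_map]

end Gates

theorem eval_lit (x : Fin n → Bool) (i : Fin n) (b : Bool) :
    (lit i b).eval x = true ↔ x i = b := by
  cases b <;> simp [eval, fold, Circuit.gateOp]

theorem depth_lit_le (i : Fin n) (b : Bool) : (lit i b).depth ≤ 1 := by
  cases b <;> simp [depth, fold, Circuit.levelOp]

theorem depth_and_le {l : List (Formula n)} {D : ℕ} (h : ∀ φ ∈ l, φ.depth ≤ D) :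
    (and l).depth ≤ D + 1 := by
  rw [depth_and]
  exact Nat.succ_le_succ (List.max_le_of_forall_le _ _ (by simpa using h))

theorem depth_or_le {l : List (Formula n)} {D : ℕ} (h : ∀ φ ∈ l, φ.depth ≤ D) :
    (or l).depth ≤ D + 1 := by
  rw [depth_or]
  exact Nat.succ_le_succ (List.max_le_of_forall_le _ _ (by simpa using h))

section Finset

variable {ι : Type*} {s : Finset ι} {f : ι → Formula n}

noncomputable def allOf (s : Finset ι) (f : ι → Formula n) : Formula n := .and (s.toList.map f)

noncomputable def anyOf (s : Finset ι) (f : ι → Formula n) : Formula n := .or (s.toList.map f)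

theorem eval_allOf (x : Fin n → Bool) :
    (allOf s f).eval x = true ↔ ∀ i ∈ s, (f i).eval x = true := by
  simp [allOf, eval_and]

theorem eval_anyOf (x : Fin n → Bool) :
    (anyOf s f).eval x = true ↔ ∃ i ∈ s, (f i).eval x = true := by
  simp [anyOf, eval_or]

theorem depth_allOf_le {D : ℕ} (h : ∀ i ∈ s, (f i).depth ≤ D) : (allOf s f).depth ≤ D + 1 :=
  depth_and_le (by simpa using h)

theorem depth_anyOf_le {D : ℕ} (h : ∀ i ∈ s, (f i).depth ≤ D) : (anyOf s f).depth ≤ D + 1 :=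
  depth_or_le (by simpa using h)

end Finset

inductive FaninLE (F : ℕ) : Formula n → Prop
  | lit (i : Fin n) (b : Bool) : FaninLE F (lit i b)
  | and {l : List (Formula n)} : l.length ≤ F → (∀ φ ∈ l, FaninLE F φ) → FaninLE F (.and l)
  | or {l : List (Formula n)} : l.length ≤ F → (∀ φ ∈ l, FaninLE F φ) → FaninLE F (.or l)

theorem FaninLE.allOf {ι : Type*} {s : Finset ι} {f : ι → Formula n} {F : ℕ} (hs : s.card ≤ F)
    (h : ∀ i ∈ s, FaninLE F (f i)) : FaninLE F (allOf s f) :=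
  .and (by simpa using hs) (by simpa using h)

theorem FaninLE.anyOf {ι : Type*} {s : Finset ι} {f : ι → Formula n} {F : ℕ} (hs : s.card ≤ F)
    (h : ∀ i ∈ s, FaninLE F (f i)) : FaninLE F (anyOf s f) :=
  .or (by simpa using hs) (by simpa using h)

theorem FaninLE.size_lt {F : ℕ} {φ : Formula n} (h : FaninLE F φ) :
    φ.size < (F + 2) ^ φ.depth := by
  induction h with
  | lit i b => cases b <;> simp [size, depth, fold, Circuit.levelOp]
  | @and l hl _ ih | @or l hl _ ih =>
    simp only [size_and, size_or, depth_and, depth_or]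
    set D := (l.map depth).foldr max 0
    have hsizes : ∀ w ∈ l.map size, w < (F + 2) ^ D := by
      simp only [List.mem_map, forall_exists_index, and_imp, forall_apply_eq_imp_iff₂]
      exact fun φ hφ => (ih φ hφ).trans_le
        (Nat.pow_le_pow_right (by omega) (List.le_max_of_le' 0 (List.mem_map_of_mem hφ) le_rfl))
    have hB : 0 < (F + 2) ^ D := by positivity
    have := List.length_add_sum_le_length_mul hsizes
    rw [List.length_map] at this
    rw [pow_succ]
    nlinarith

mutual

def compile : Formula n → Netlist n → Netlist n × (Fin n ⊕ ℕ)
  | lit i true, L => (L, .inl i)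
  | lit i false, L => L.push .not [.inl i]
  | .and l, L => (compileList l L).1.push .and (compileList l L).2
  | .or l, L => (compileList l L).1.push .or (compileList l L).2

def compileList : List (Formula n) → Netlist n → Netlist n × List (Fin n ⊕ ℕ)
  | [], L => (L, [])
  | φ :: l, L =>
    ((compileList l (compile φ L).1).1, (compile φ L).2 :: (compileList l (compile φ L).1).2)

end

theorem length_compileList_snd :
    ∀ (l : List (Formula n)) (L : Netlist n), (compileList l L).2.length = l.length
  | [], _ => rfl
  | _ :: l, _ => congrArg Nat.succ (length_compileList_snd l _)

mutual

theorem prefix_compile : ∀ (φ : Formula n) (L : Netlist n), L <+: (compile φ L).1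
  | lit _ true, L => List.prefix_refl L
  | lit _ false, _ => List.prefix_append _ _
  | .and l, L | .or l, L => (prefix_compileList l L).trans (List.prefix_append _ _)

theorem prefix_compileList : ∀ (l : List (Formula n)) (L : Netlist n), L <+: (compileList l L).1
  | [], L => List.prefix_refl L
  | φ :: l, L => (prefix_compile φ L).trans (prefix_compileList l _)

end

open Netlist

mutual

theorem wellFormed_compile : ∀ (φ : Formula n) {L : Netlist n}, L.WellFormed →
    (compile φ L).1.WellFormed ∧ RefBelow (compile φ L).1.length (compile φ L).2
  | lit _ true, _, hL => ⟨hL, trivial⟩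
  | lit _ false, _, hL =>
    ⟨hL.push (by simp [RefBelow]) (by simp [ArityOK]), refBelow_push _ _ _⟩
  | .and l, _, hL | .or l, _, hL =>
    ⟨(wellFormed_compileList l hL).1.push (wellFormed_compileList l hL).2 (by simp [ArityOK]),
      refBelow_push _ _ _⟩

theorem wellFormed_compileList : ∀ (l : List (Formula n)) {L : Netlist n}, L.WellFormed →
    (compileList l L).1.WellFormed ∧
      ∀ r ∈ (compileList l L).2, RefBelow (compileList l L).1.length r
  | [], _, hL => ⟨hL, by simp [compileList]⟩
  | φ :: l, _, hL => by
    obtain ⟨hφ, hroot⟩ := wellFormed_compile φ hL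
    obtain ⟨hl, hrefs⟩ := wellFormed_compileList l hφ
    refine ⟨hl, ?_⟩
    simp only [compileList, List.mem_cons, forall_eq_or_imp]
    exact ⟨hroot.mono (prefix_compileList l _).length_le, hrefs⟩

end

mutual

theorem fold_eq_of_solves {leaf : Fin n → V} {op : GateKind → List V → V} {val : ℕ → V} :
    ∀ (φ : Formula n) {L : Netlist n}, (compile φ L).1.Solves leaf op val →
      Sum.elim leaf val (compile φ L).2 = φ.fold leaf op
  | lit _ true, _, _ => by simp [compile, fold]
  | lit _ false, _, h => by simpa [compile, fold] using h.push
  | .and l, _, h | .or l, _, h => by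
    rw [compile, h.push, fold, map_fold_eq_of_solves l (h.of_prefix (List.prefix_append _ _))]

theorem map_fold_eq_of_solves {leaf : Fin n → V} {op : GateKind → List V → V}
    {val : ℕ → V} : ∀ (l : List (Formula n)) {L : Netlist n},
      (compileList l L).1.Solves leaf op val →
        (compileList l L).2.map (Sum.elim leaf val) = l.map (fold leaf op)
  | [], _, _ => rfl
  | φ :: l, _, h => by
    rw [compileList, List.map_cons, List.map_cons, map_fold_eq_of_solves l h,
      fold_eq_of_solves φ (h.of_prefix (prefix_compileList l _))]

end

mutual

theorem wires_compile : ∀ (φ : Formula n) (L : Netlist n),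
    wires (compile φ L).1 = wires L + φ.size
  | lit _ true, L => by simp [compile, size, fold]
  | lit _ false, L => by simp [compile, size, fold, wires_push]
  | .and l, L | .or l, L => by
    rw [compile, wires_push, wires_compileList, length_compileList_snd, size, fold, ← size,
      List.length_map]
    omega

theorem wires_compileList : ∀ (l : List (Formula n)) (L : Netlist n),
    wires (compileList l L).1 = wires L + (l.map size).sum
  | [], L => rfl
  | φ :: l, L => by
    rw [compileList, wires_compileList, wires_compile, List.map_cons, List.sum_cons, add_assoc]

end

def toCircuit (φ : Formula n) : Circuit n 1 :=
  (compile φ []).1.toCircuit (wellFormed_compile φ (by simp [WellFormed])).1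
    (compile φ []).2 (wellFormed_compile φ (by simp [WellFormed])).2

theorem toCircuit_computes (φ : Formula n) : φ.toCircuit.Computes fun x _ => φ.eval x := by
  intro x v hv o
  obtain ⟨val, hsolves, hout⟩ := exists_solves_of_toCircuit v hv.1 hv.2
  rw [Subsingleton.elim o 0]
  exact hout.trans (fold_eq_of_solves φ hsolves)

theorem toCircuit_depthLE (φ : Formula n) : φ.toCircuit.DepthLE φ.depth := by
  refine Circuit.depthLE_of_evalWith_levelOp_le _ fun o => ?_
  obtain ⟨val, hsolves, hout⟩ := exists_solves_of_toCircuit (φ.toCircuit.evalWith _ _)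
    (φ.toCircuit.evalWith_inl (fun _ => 0) Circuit.levelOp) (φ.toCircuit.evalWith_inr _ _)
  rw [Subsingleton.elim o 0]
  exact (hout.trans (fold_eq_of_solves φ hsolves)).le

theorem size_toCircuit (φ : Formula n) : φ.toCircuit.size = φ.size := by
  rw [toCircuit, Netlist.size_toCircuit, wires_compile, wires, List.map_nil, List.sum_nil,
    zero_add]

end Formula

/-- The base `n + 2` lets constants and sums be bounded without a multiplicative constant. -/
def PolyBounded (f : ℕ → ℕ) : Prop := ∃ c, ∀ n, f n ≤ (n + 2) ^ c

namespace PolyBounded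

theorem const (a : ℕ) : PolyBounded fun _ => a :=
  ⟨a, fun n => (Nat.lt_two_pow_self).le.trans (Nat.pow_le_pow_left (by omega) a)⟩

theorem id : PolyBounded fun n => n := ⟨1, fun n => by simp⟩

variable {f g : ℕ → ℕ}

theorem mono (hg : PolyBounded g) (h : ∀ n, f n ≤ g n) : PolyBounded f :=
  let ⟨c, hc⟩ := hg
  ⟨c, fun n => (h n).trans (hc n)⟩

theorem add (hf : PolyBounded f) (hg : PolyBounded g) : PolyBounded fun n => f n + g n := by
  obtain ⟨a, ha⟩ := hf
  obtain ⟨b, hb⟩ := hg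
  refine ⟨max a b + 1, fun n => ?_⟩
  have h1 := (ha n).trans (Nat.pow_le_pow_right (by omega) (le_max_left a b))
  have h2 := (hb n).trans (Nat.pow_le_pow_right (by omega) (le_max_right a b))
  rw [pow_succ]
  nlinarith

theorem mul (hf : PolyBounded f) (hg : PolyBounded g) : PolyBounded fun n => f n * g n := by
  obtain ⟨a, ha⟩ := hf
  obtain ⟨b, hb⟩ := hg
  exact ⟨a + b, fun n => pow_add (n + 2) a b ▸ Nat.mul_le_mul (ha n) (hb n)⟩

theorem pow (hf : PolyBounded f) (k : ℕ) : PolyBounded fun n => f n ^ k := by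
  obtain ⟨a, ha⟩ := hf
  exact ⟨a * k, fun n => pow_mul (n + 2) a k ▸ Nat.pow_le_pow_left (ha n) k⟩

theorem exists_le_mul_pow_add (hf : PolyBounded f) {s : ℕ} (hs : 0 < s) :
    ∃ c, ∀ n, f n ≤ (s * n) ^ c + c := by
  obtain ⟨a, ha⟩ := hf
  refine ⟨2 * a + 3 ^ a, fun n => (ha n).trans ?_⟩
  rcases Nat.lt_or_ge n 2 with hn | hn
  · have : (n + 2) ^ a ≤ 3 ^ a := Nat.pow_le_pow_left (by omega) a
    omega
  · have : n ≤ s * n := Nat.le_mul_of_pos_left n hs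
    calc (n + 2) ^ a ≤ (s * n) ^ (2 * a) := by
          rw [pow_mul]
          exact Nat.pow_le_pow_left (by nlinarith) a
      _ ≤ (s * n) ^ (2 * a + 3 ^ a) := Nat.pow_le_pow_right (by positivity) (Nat.le_add_right _ _)
      _ ≤ _ := Nat.le_add_right _ _

end PolyBounded

theorem leftmostArgmax_eq_iff {n : ℕ} (hn : 0 < n) (a : Fin n → ℝ) (b : Fin n) :
    leftmostArgmax hn a = b ↔ ∀ j, a j ≤ a b ∧ (j < b → a j < a b) := by
  unfold leftmostArgmax
  rw [Finset.min'_eq_iff]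
  simp only [Finset.mem_filter, Finset.mem_univ, true_and]
  constructor
  · rintro ⟨hb, hmin⟩ j
    exact ⟨hb j, fun hj => lt_of_not_ge fun hle => (hmin j fun l => (hb l).trans hle).not_gt hj⟩
  · intro h
    exact ⟨fun l => (h l).1, fun c hc => le_of_not_gt fun hcb => ((h c).2 hcb).not_ge (hc b)⟩

def bitIndex {n s : ℕ} (i : Fin n) (r : Fin s) : Fin (s * n) :=
  Fin.cast (Nat.mul_comm n s) (finProdFinEquiv (i, r))

theorem encodeInput_bitIndex {σ : Type} {s : ℕ} (hs : 0 < s) (h : (σ ⊕ Unit) → Fin s → Bool)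
    (x : List σ) (i : Fin (x.length + 1)) (r : Fin s) :
    encodeInput hs h x (bitIndex i r) = h (GT.inputSeq x i) r := by
  have hval : ((bitIndex i r : Fin (s * (x.length + 1))) : ℕ) = r + s * i := rfl
  unfold encodeInput
  congr 2
  · ext
    change (bitIndex i r : ℕ) / s = i
    rw [hval, Nat.add_mul_div_left _ _ hs, Nat.div_eq_of_lt r.2, zero_add]
  · rw [hval, Nat.add_mul_mod_self_left, Nat.mod_eq_of_lt r.2]

namespace GT

/-- The activations of the informative normal form at layer `k`. -/
def History (α : Type) (H n : ℕ) : ℕ → Type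
  | 0 => Fin n × α
  | k + 1 => History α H n k × (Fin H → History α H n k)

namespace History

variable {α : Type} {H n : ℕ}

instance instFintype [Fintype α] : ∀ k, Fintype (History α H n k)
  | 0 => inferInstanceAs (Fintype (Fin n × α))
  | k + 1 =>
    letI := instFintype k
    inferInstanceAs (Fintype (History α H n k × (Fin H → History α H n k)))

def pos : {k : ℕ} → History α H n k → Fin n
  | 0, d => d.1
  | _ + 1, d => pos d.1

theorem card_mono (α : Type) [Fintype α] (H n : ℕ) :
    Monotone fun k => Fintype.card (History α H n k) :=
  monotone_nat_of_le_succ fun k =>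
    Fintype.card_le_of_injective (fun d => ((d, fun _ => d) : History α H n (k + 1)))
      fun _ _ hde => congrArg Prod.fst hde

theorem polyBounded_card (α : Type) [Fintype α] (H : ℕ) :
    ∀ k, PolyBounded fun n => Fintype.card (History α H n k)
  | 0 => (PolyBounded.id.mul (.const (Fintype.card α))).mono fun n =>
    (Fintype.card_prod (Fin n) α).trans (by rw [Fintype.card_fin]) |>.le
  | k + 1 => ((polyBounded_card α H k).mul ((polyBounded_card α H k).pow H)).mono fun n =>
    (Fintype.card_prod (History α H n k) (Fin H → History α H n k)).trans
      (by rw [Fintype.card_fun, Fintype.card_fin]) |>.le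

end History

section Semantics

variable {σ : Type} (T : GT σ)

def evalHistory {n : ℕ} : {k : ℕ} → History (σ ⊕ Unit) T.H n k → T.A
  | 0, d => T.f d.2 (d.1 + 1) n
  | k + 1, d => T.fact (k + 1) (evalHistory d.1) fun hh => evalHistory (d.2 hh)

variable (x : List σ)

noncomputable def activation (k : ℕ) : Fin (x.length + 1) → T.A :=
  T.acts (Nat.succ_pos _) (T.y0 x) k

noncomputable def attended (k : ℕ) (hh : Fin T.H) (i : Fin (x.length + 1)) :
    Fin (x.length + 1) :=
  leftmostArgmax (Nat.succ_pos _) fun j =>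
    T.fatt (k + 1) hh.val.succ (T.activation x k i) (T.activation x k j)

noncomputable def history :
    (k : ℕ) → Fin (x.length + 1) → History (σ ⊕ Unit) T.H (x.length + 1) k
  | 0, i => (i, inputSeq x i)
  | k + 1, i => (history k i, fun hh => history k (T.attended x k hh i))

theorem history_succ (k : ℕ) (i : Fin (x.length + 1)) :
    T.history x (k + 1) i = (T.history x k i, fun hh => T.history x k (T.attended x k hh i)) :=
  rfl

theorem pos_history : ∀ k i, (T.history x k i).pos = i
  | 0, _ => rfl
  | k + 1, i => pos_history k i

theorem evalHistory_history : ∀ k i, T.evalHistory (T.history x k i) = T.activation x k i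
  | 0, _ => rfl
  | k + 1, i =>
    congrArg₂ (T.fact (k + 1)) (evalHistory_history k i)
      (funext fun hh => evalHistory_history k (T.attended x k hh i))

variable {T x}

theorem exists_eq_history_iff {k : ℕ} {j : Fin (x.length + 1)}
    {P : History (σ ⊕ Unit) T.H (x.length + 1) k → Prop} :
    (∃ e, (e.pos = j ∧ P e) ∧ e = T.history x k e.pos) ↔ P (T.history x k j) := by
  constructor
  · rintro ⟨e, ⟨rfl, hP⟩, he⟩
    rwa [← he]
  · exact fun hP => ⟨_, ⟨pos_history T x k j, hP⟩, by rw [pos_history]⟩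

theorem eq_history_attended_iff {k : ℕ} (hh : Fin T.H) (i : Fin (x.length + 1))
    (e : History (σ ⊕ Unit) T.H (x.length + 1) k) :
    e = T.history x k (T.attended x k hh i) ↔ e = T.history x k e.pos ∧ ∀ j,
      T.fatt (k + 1) hh.val.succ (T.activation x k i) (T.activation x k j) ≤
          T.fatt (k + 1) hh.val.succ (T.activation x k i) (T.evalHistory e) ∧
        (j < e.pos → T.fatt (k + 1) hh.val.succ (T.activation x k i) (T.activation x k j) <
          T.fatt (k + 1) hh.val.succ (T.activation x k i) (T.evalHistory e)) := by
  constructor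
  · rintro rfl
    rw [pos_history, evalHistory_history]
    exact ⟨rfl, (leftmostArgmax_eq_iff _ _ _).mp rfl⟩
  · rintro ⟨he, hscore⟩
    rw [he, evalHistory_history, pos_history] at hscore
    exact he.trans (congrArg (T.history x k) ((leftmostArgmax_eq_iff _ _ _).mpr hscore).symm)

end Semantics

open Formula

noncomputable def symbolFormula {σ : Type} {s n : ℕ} (h : (σ ⊕ Unit) → Fin s → Bool) (i : Fin n)
    (a : σ ⊕ Unit) : Formula (s * n) :=
  allOf Finset.univ fun r => lit (bitIndex i r) (h a r)

theorem eval_symbolFormula_iff {σ : Type} {s : ℕ} (hs : 0 < s) {h : (σ ⊕ Unit) → Fin s → Bool}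
    (hinj : Function.Injective h) (x : List σ) (i : Fin (x.length + 1)) (a : σ ⊕ Unit) :
    (symbolFormula h i a).eval (encodeInput hs h x) = true ↔ inputSeq x i = a := by
  simp only [symbolFormula, eval_allOf, Finset.mem_univ, forall_const, eval_lit,
    encodeInput_bitIndex]
  rw [← funext_iff, hinj.eq_iff]

variable {σ : Type} [Fintype σ] (T : GT σ) {s : ℕ} (h : (σ ⊕ Unit) → Fin s → Bool) (n : ℕ)

open Classical in
noncomputable def historyFormula : (k : ℕ) → History (σ ⊕ Unit) T.H n k → Formula (s * n)
  | 0, d => symbolFormula h d.1 d.2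
  | k + 1, d =>
    let score (hh : Fin T.H) (e : History (σ ⊕ Unit) T.H n k) : ℝ :=
      T.fatt (k + 1) hh.val.succ (T.evalHistory d.1) (T.evalHistory e)
    .and [historyFormula k d.1, allOf Finset.univ fun hh => historyFormula k (d.2 hh),
      allOf Finset.univ fun hh => allOf Finset.univ fun j =>
        anyOf (Finset.univ.filter fun e => e.pos = j ∧ score hh e ≤ score hh (d.2 hh) ∧
          (j < (d.2 hh).pos → score hh e < score hh (d.2 hh))) (historyFormula k)]

open Classical in
/-- `d.pos.val + 1 = n` selects the last position without assuming `0 < n`. -/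
noncomputable def acceptFormula : Formula (s * n) :=
  anyOf (Finset.univ.filter fun d : History (σ ⊕ Unit) T.H n T.K =>
    d.pos.val + 1 = n ∧ T.g (T.evalHistory d) = true) (historyFormula T h n T.K)

section Correctness

variable {T h}

theorem eval_historyFormula_iff (hs : 0 < s) (hinj : Function.Injective h) (x : List σ) :
    ∀ k (d : History (σ ⊕ Unit) T.H (x.length + 1) k),
      (historyFormula T h _ k d).eval (encodeInput hs h x) = true ↔ d = T.history x k d.pos
  | 0, (i, a) => by
    change (symbolFormula h i a).eval _ = true ↔ (i, a) = (i, inputSeq x i)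
    rw [eval_symbolFormula_iff hs hinj, Prod.mk.injEq, eq_comm (a := a)]
    exact (and_iff_right rfl).symm
  | k + 1, (d, e) => by
    have ih := eval_historyFormula_iff hs hinj x k
    simp only [historyFormula, eval_and, List.mem_cons, List.not_mem_nil, or_false,
      forall_eq_or_imp, forall_eq, eval_allOf, eval_anyOf, Finset.mem_univ, forall_const,
      Finset.mem_filter, true_and, ih, exists_eq_history_iff, evalHistory_history]
    change _ ↔ (d, e) = T.history x (k + 1) d.pos
    rw [history_succ, Prod.mk.injEq, funext_iff, ← forall_and]
    refine and_congr_right fun hd => forall_congr' fun hh => ?_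
    rw [hd, evalHistory_history, pos_history, eq_history_attended_iff]

theorem eval_acceptFormula_iff (hs : 0 < s) (hinj : Function.Injective h) (x : List σ) :
    (T.acceptFormula h (x.length + 1)).eval (encodeInput hs h x) = true ↔ x ∈ T.lang := by
  have hlast (p : Fin (x.length + 1)) : p.val + 1 = x.length + 1 ↔ p = Fin.last _ := by
    rw [Fin.ext_iff, Fin.val_last]
    omega
  simp only [acceptFormula, eval_anyOf, Finset.mem_filter, Finset.mem_univ, true_and,
    eval_historyFormula_iff hs hinj, hlast, exists_eq_history_iff, evalHistory_history]
  rfl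

end Correctness

theorem depth_historyFormula_le : ∀ k d, (historyFormula T h n k d).depth ≤ 4 * k + 2
  | 0, _ => depth_allOf_le fun _ _ => depth_lit_le _ _
  | k + 1, d => by
    have ih := depth_historyFormula_le k
    refine depth_and_le (D := 4 * k + 5) ?_
    simp only [List.mem_cons, List.not_mem_nil, or_false, forall_eq_or_imp, forall_eq]
    exact ⟨(ih _).trans (by omega), depth_allOf_le fun _ _ => (ih _).trans (by omega),
      depth_allOf_le fun _ _ => depth_allOf_le fun _ _ => depth_anyOf_le fun _ _ => ih _⟩

theorem depth_acceptFormula_le : (T.acceptFormula h n).depth ≤ 4 * T.K + 3 :=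
  depth_anyOf_le fun _ _ => depth_historyFormula_le T h n _ _

/-- The fan-ins below: encoding width, three conjuncts per layer, heads, positions, and
histories of a layer up to `T.K`. -/
def faninBound (s : ℕ) : ℕ := s + 3 + T.H + n + Fintype.card (History (σ ⊕ Unit) T.H n T.K)

theorem faninLE_historyFormula : ∀ k ≤ T.K, ∀ d,
    (historyFormula T h n k d).FaninLE (T.faninBound n s)
  | 0, _, _ => FaninLE.allOf (by simp [faninBound]; omega) fun _ _ => .lit _ _
  | k + 1, hk, d => by
    have ih := faninLE_historyFormula k (by omega)
    have hcard : Fintype.card (History (σ ⊕ Unit) T.H n k) ≤ T.faninBound n s :=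
      (History.card_mono _ _ _ (by omega : k ≤ T.K)).trans (by simp [faninBound])
    refine .and (by simp [faninBound]; omega) ?_
    simp only [List.mem_cons, List.not_mem_nil, or_false, forall_eq_or_imp, forall_eq]
    exact ⟨ih _, .allOf (by simp [faninBound]; omega) fun _ _ => ih _,
      .allOf (by simp [faninBound]; omega) fun _ _ => .allOf (by simp [faninBound]; omega)
        fun _ _ => .anyOf ((Finset.card_filter_le _ _).trans hcard) fun _ _ => ih _⟩

theorem faninLE_acceptFormula : (T.acceptFormula h n).FaninLE (T.faninBound n s) :=
  .anyOf ((Finset.card_filter_le _ _).trans (by simp [faninBound]))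
    fun _ _ => faninLE_historyFormula T h n _ le_rfl _

theorem polyBounded_size_acceptFormula : PolyBounded fun n => (T.acceptFormula h n).size := by
  refine ((((PolyBounded.const (s + 3 + T.H)).add .id).add
    (History.polyBounded_card (σ ⊕ Unit) T.H T.K)).add (.const 2)).pow (4 * T.K + 3)
    |>.mono fun n => ?_
  exact (T.faninLE_acceptFormula h n).size_lt.le.trans
    (Nat.pow_le_pow_right (by omega) (T.depth_acceptFormula_le h n))

end GT

/-- Every language recognized by a generalized unique hard attention Transformer
(GUHAT) is in `AC⁰`: for every GUHAT `T` over a finite alphabet `Σ`, with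
`s = ⌈log₂(|Σ|+2)⌉` and any binary symbol encoding `h` of `Σ ∪ {$}`, there is a family
of Boolean circuits of constant depth and polynomial size whose member with `s·n`
inputs, on the encoding of `x$` (where `n = |x| + 1`), outputs `1` iff `x ∈ L(T)`. -/
theorem guhat_in_AC0 (σ : Type) [Fintype σ] (T : GT σ)
    (h : (σ ⊕ Unit) → Fin (Nat.clog 2 (Fintype.card σ + 2)) → Bool)
    (hinj : Function.Injective h) :
    ∃ C : (n : ℕ) → Circuit (Nat.clog 2 (Fintype.card σ + 2) * n) 1,
      (∃ K, ∀ n, (C n).DepthLE K) ∧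
      (∃ c, ∀ n, (C n).size ≤ (Nat.clog 2 (Fintype.card σ + 2) * n) ^ c + c) ∧
      (∀ (x : List σ) v,
        (C (x.length + 1)).Consistent (encodeInput (Nat.clog_pos one_lt_two (by omega)) h x) v →
          (v ((C (x.length + 1)).out 0) = true ↔ x ∈ T.lang)) := by
  have hs : 0 < Nat.clog 2 (Fintype.card σ + 2) := Nat.clog_pos one_lt_two (by omega)
  obtain ⟨c, hc⟩ := (T.polyBounded_size_acceptFormula h).exists_le_mul_pow_add hs
  refine ⟨fun n => (T.acceptFormula h n).toCircuit,
    ⟨4 * T.K + 3, fun n => (Formula.toCircuit_depthLE _).mono (T.depth_acceptFormula_le h n)⟩,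
    ⟨c, fun n => (Formula.size_toCircuit _).trans_le (hc n)⟩, fun x v hv => ?_⟩
  rw [Formula.toCircuit_computes _ _ v hv 0, T.eval_acceptFormula_iff hs hinj]
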